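/- arXiv:1607.03454 — 8 statements merged into one kernel-verified Lean document; each statement's English description precedes it below -/
import Mathlib

section
/- Suppose μ ∈ ℂ is such that λ := 1/μ satisfies |λ| < ρ, and v = (v_j)_{j≥1} ∈ ℓ₁(ρ) is a nonzero block vector satisfying 𝐀v = μ·v, i.e., the series Σ_{j≥1} N_j·v_j converges with λ·Σ_{j≥1} N_j·v_j = v₁, and λ·(1/j)·v_j = v_{j+1} for all j ≥ 1. Then there exists a vector x ∈ ℂⁿ such that v_j = (λ^{j-1}/(j-1)!)·x for every j ≥ 1. -/
open Matrix

/-- The `j`-th derivative of the matrix-valued function `M` at `0`, taken entrywise. -/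
noncomputable def Mder (n : ℕ) (M : ℂ → Matrix (Fin n) (Fin n) ℂ) (j : ℕ) :
    Matrix (Fin n) (Fin n) ℂ :=
  Matrix.of fun i i' => iteratedDeriv j (fun z => M z i i') 0

/-- `N_j = -(1/j) M(0)⁻¹ M^{(j)}(0)`. -/
noncomputable def Nmat (n : ℕ) (M : ℂ → Matrix (Fin n) (Fin n) ℂ) (j : ℕ) :
    Matrix (Fin n) (Fin n) ℂ :=
  (-(1/(j:ℂ))) • ((M 0)⁻¹ * Mder n M j)

/-- Matrix-vector product on Euclidean space. -/
noncomputable def mvE {n : ℕ} (A : Matrix (Fin n) (Fin n) ℂ)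
    (x : EuclideanSpace ℂ (Fin n)) : EuclideanSpace ℂ (Fin n) :=
  WithLp.toLp 2 (A.mulVec x)

theorem pow_div_factorial_succ {𝕜 : Type*} [Field 𝕜] [CharZero 𝕜] (lam : 𝕜) (j : ℕ) :
    lam ^ (j + 1) / ((j + 1).factorial : 𝕜) =
      lam * (1 / ((j : 𝕜) + 1)) * (lam ^ j / j.factorial) := by
  have hj : (j : 𝕜) + 1 ≠ 0 := Nat.cast_add_one_ne_zero j
  have hfact : (j.factorial : 𝕜) ≠ 0 := Nat.cast_ne_zero.mpr j.factorial_ne_zero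
  rw [Nat.factorial_succ]
  push_cast
  field_simp
  ring

theorem eq_pow_div_factorial_smul_of_smul_div_succ {𝕜 E : Type*} [Field 𝕜] [CharZero 𝕜]
    [AddCommMonoid E] [Module 𝕜 E] (lam : 𝕜) (v : ℕ → E)
    (hrec : ∀ j : ℕ, lam • ((1 / ((j : 𝕜) + 1)) • v j) = v (j + 1)) (j : ℕ) :
    v j = (lam ^ j / (j.factorial : 𝕜)) • v 0 := by
  induction j with
  | zero => simp
  | succ j ih => rw [← hrec j, ih, smul_smul, smul_smul, pow_div_factorial_succ]

/-- Blocks are indexed from `0`: `v j` is the block `v_{j+1}` of the paper. -/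
theorem right_eigvec_structure_general
    (n : ℕ)
    (lam : ℂ)
    (v : ℕ → EuclideanSpace ℂ (Fin n))
    (hrec : ∀ j : ℕ, lam • ((1/((j:ℂ)+1)) • v j) = v (j+1)) :
    ∃ x : EuclideanSpace ℂ (Fin n),
      ∀ j : ℕ, v j = (lam^j / (Nat.factorial j : ℂ)) • x :=
  ⟨v 0, eq_pow_div_factorial_smul_of_smul_div_succ lam v hrec⟩

/-- if `(μ, v)` with `v ∈ ℓ₁(ρ)`, `v ≠ 0`, is an eigenpair of `𝐀` and
`λ = 1/μ` satisfies `|λ| < ρ`, then the blocks of `v` satisfy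
`v_j = (λ^{j-1}/(j-1)!) x` for some `x ∈ ℂⁿ`.
Blocks are indexed from `0` here: `v j` is the block `v_{j+1}` of the paper. -/
theorem right_eigvec_structure
    (n : ℕ) (hn : 1 ≤ n) (ρ : ℝ) (hρ : 0 < ρ)
    (M : ℂ → Matrix (Fin n) (Fin n) ℂ)
    (hM : ∀ i i', AnalyticOnNhd ℂ (fun z => M z i i') (Metric.closedBall (0:ℂ) ρ))
    (hM0 : IsUnit (M 0))
    (μ lam : ℂ) (hlam : lam = 1/μ) (hlamρ : ‖lam‖ < ρ)
    (v : ℕ → EuclideanSpace ℂ (Fin n)) (hvne : v ≠ 0)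
    (hvl1 : Summable fun j : ℕ => ρ^(j+1) / (Nat.factorial (j+1)) * ‖v j‖)
    (hfirst : ∃ s : EuclideanSpace ℂ (Fin n),
      HasSum (fun j : ℕ => mvE (Nmat n M (j+1)) (v j)) s ∧ lam • s = v 0)
    (hrec : ∀ j : ℕ, lam • ((1/((j:ℂ)+1)) • v j) = v (j+1)) :
    ∃ x : EuclideanSpace ℂ (Fin n),
      ∀ j : ℕ, v j = (lam^j / (Nat.factorial j : ℂ)) • x :=
  right_eigvec_structure_general n lam v hrec
end

section
/- Let λ ∈ ℂ with 0 < |λ| < ρ and let x ∈ ℂⁿ be nonzero. Define the block vector v by v_j := (λ^{j-1}/(j-1)!)·x for j ≥ 1. Then M(λ)·x = 0 if and only if v ∈ ℓ₁(ρ), the series Σ_{j≥1} N_j·v_j converges with λ·Σ_{j≥1} N_j·v_j = v₁, and λ·(1/j)·v_j = v_{j+1} for all j ≥ 1 (i.e., if and only if (1/λ, v) is an eigenpair of 𝐀). -/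
/-!
Taylor's theorem for `M` at `0` gives `∑_{j ≥ 1} (λ^j / j!) M^{(j)}(0) = M(λ) - M(0)`.
Multiplying by `-λ⁻¹ M(0)⁻¹` and applying the result to `x` turns this into
`λ ∑_{j ≥ 1} N_j v_j = x - M(0)⁻¹ M(λ) x`, so the first row of the eigen-equation holds exactly
when `M(λ) x = 0`. The remaining rows and the `ℓ₁(ρ)` bound hold for every `λ` and `x`, because
the `v_j` are the terms of the exponential series of `λ`.
-/

open Matrix

open Nat

theorem summable_pow_succ_div_factorial_mul_norm_smul {E : Type*} [NormedAddCommGroup E]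
    [NormedSpace ℂ E] (ρ : ℝ) (lam : ℂ) (x : E) :
    Summable fun j : ℕ => ρ ^ (j + 1) / (j + 1)! * ‖(lam ^ j / j !) • x‖ := by
  have hρ : Summable fun j : ℕ => ‖ρ ^ (j + 1) / (j + 1)!‖ := by
    simpa [abs_div] using (summable_nat_add_iff 1).mpr (Real.summable_pow_div_factorial |ρ|)
  have hx : Summable fun j : ℕ => ‖(lam ^ j / j !) • x‖ := by
    simpa [norm_smul] using (Real.summable_pow_div_factorial ‖lam‖).mul_right ‖x‖
  refine Summable.of_norm_bounded (hρ.mul_right (∑' k, ‖(lam ^ k / k !) • x‖)) fun j => ?_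
  rw [norm_mul, norm_norm]
  exact mul_le_mul_of_nonneg_left (hx.le_tsum j fun k _ => norm_nonneg _) (norm_nonneg _)

theorem smul_one_div_succ_smul_pow_div_factorial {E : Type*} [AddCommGroup E] [Module ℂ E]
    (lam : ℂ) (x : E) (j : ℕ) :
    lam • ((1 / ((j : ℂ) + 1)) • ((lam ^ j / j !) • x)) = (lam ^ (j + 1) / (j + 1)!) • x := by
  rw [smul_smul, smul_smul]
  congr 1
  push_cast [Nat.factorial_succ]
  field_simp
  ring

section

variable {n : ℕ}

theorem Mder_zero (M : ℂ → Matrix (Fin n) (Fin n) ℂ) : Mder n M 0 = M 0 := by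
  ext i i'
  simp [Mder]

theorem hasSum_pow_div_factorial_smul_Mder {M : ℂ → Matrix (Fin n) (Fin n) ℂ} {r : ℝ}
    (hM : ∀ i i', DifferentiableOn ℂ (fun z => M z i i') (Metric.ball 0 r))
    {z : ℂ} (hz : z ∈ Metric.ball 0 r) :
    HasSum (fun j => (z ^ j / j !) • Mder n M j) (M z) := by
  refine Pi.hasSum.mpr fun i => Pi.hasSum.mpr fun i' => ?_
  show HasSum (fun j => z ^ j / j ! * iteratedDeriv j (fun z => M z i i') 0) (M z i i')
  simpa [div_eq_inv_mul, mul_assoc] using Complex.hasSum_taylorSeries_on_ball (hM i i') hz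

theorem mvE_smul_left (c : ℂ) (A : Matrix (Fin n) (Fin n) ℂ) (x : EuclideanSpace ℂ (Fin n)) :
    mvE (c • A) x = mvE A (c • x) := by
  rw [mvE, mvE, WithLp.ofLp_smul, Matrix.smul_mulVec, Matrix.mulVec_smul]

theorem HasSum.mvE {ι : Type*} {f : ι → Matrix (Fin n) (Fin n) ℂ} {A : Matrix (Fin n) (Fin n) ℂ}
    (hf : HasSum f A) (x : EuclideanSpace ℂ (Fin n)) :
    HasSum (fun i => mvE (f i) x) (mvE A x) :=
  let L := (LinearMap.applyₗ x).comp (Matrix.toLpLin 2 2).toLinearMap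
  hf.map L L.continuous_of_finiteDimensional

theorem mvE_inv_mul_eq_zero_iff {A B : Matrix (Fin n) (Fin n) ℂ} (hA : IsUnit A)
    (x : EuclideanSpace ℂ (Fin n)) : mvE (A⁻¹ * B) x = 0 ↔ mvE B x = 0 := by
  have hinj := Matrix.mulVec_injective_iff_isUnit.mpr (Matrix.isUnit_nonsing_inv_iff.mpr hA)
  simp only [mvE, ← Matrix.mulVec_mulVec, WithLp.toLp_eq_zero]
  exact hinj.eq_iff' (Matrix.mulVec_zero _)

theorem hasSum_pow_div_factorial_smul_Nmat_succ {M : ℂ → Matrix (Fin n) (Fin n) ℂ} {r : ℝ}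
    (hM : ∀ i i', DifferentiableOn ℂ (fun z => M z i i') (Metric.ball 0 r))
    (hM0 : IsUnit (M 0)) {lam : ℂ} (hlam0 : lam ≠ 0) (hlam : lam ∈ Metric.ball 0 r) :
    HasSum (fun j => (lam ^ j / j !) • Nmat n M (j + 1)) (lam⁻¹ • (1 - (M 0)⁻¹ * M lam)) := by
  have htaylor := (hasSum_nat_add_iff' 1).mpr (hasSum_pow_div_factorial_smul_Mder hM hlam)
  simp only [Finset.range_one, Finset.sum_singleton, pow_zero, Nat.factorial_zero, Nat.cast_one,
    div_one, one_smul, Mder_zero] at htaylor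
  have hterm (j : ℕ) : (lam ^ j / j !) • Nmat n M (j + 1) =
      -lam⁻¹ • ((M 0)⁻¹ * ((lam ^ (j + 1) / (j + 1)!) • Mder n M (j + 1))) := by
    rw [Nmat, mul_smul_comm, smul_smul, smul_smul]
    congr 1
    push_cast [Nat.factorial_succ]
    field_simp
    ring
  have hvalue : lam⁻¹ • (1 - (M 0)⁻¹ * M lam) = -lam⁻¹ • ((M 0)⁻¹ * (M lam - M 0)) := by
    rw [mul_sub, Matrix.nonsing_inv_mul _ ((Matrix.isUnit_iff_isUnit_det _).mp hM0), neg_smul,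
      ← smul_neg, neg_sub]
  simp only [hterm, hvalue]
  exact (htaylor.mul_left (M 0)⁻¹).const_smul (-lam⁻¹)

theorem hasSum_mvE_Nmat_succ {M : ℂ → Matrix (Fin n) (Fin n) ℂ} {r : ℝ}
    (hM : ∀ i i', DifferentiableOn ℂ (fun z => M z i i') (Metric.ball 0 r))
    (hM0 : IsUnit (M 0)) {lam : ℂ} (hlam0 : lam ≠ 0) (hlam : lam ∈ Metric.ball 0 r)
    (x : EuclideanSpace ℂ (Fin n)) :
    HasSum (fun j => mvE (Nmat n M (j + 1)) ((lam ^ j / j !) • x))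
      (lam⁻¹ • (x - mvE ((M 0)⁻¹ * M lam) x)) := by
  convert (hasSum_pow_div_factorial_smul_Nmat_succ hM hM0 hlam0 hlam).mvE x using 1
  · funext j
    exact (mvE_smul_left _ _ _).symm
  · simp [mvE, Matrix.smul_mulVec, Matrix.sub_mulVec]

end

/-- Blocks are indexed from `0`: `v j` is the paper's `v_{j+1}`. -/
theorem right_eigvec_equivalence_general
    (n : ℕ) (ρ : ℝ)
    (M : ℂ → Matrix (Fin n) (Fin n) ℂ)
    (hM : ∀ i i', AnalyticOnNhd ℂ (fun z => M z i i') (Metric.closedBall (0:ℂ) ρ))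
    (hM0 : IsUnit (M 0))
    (lam : ℂ) (hlam0 : lam ≠ 0) (hlamρ : ‖lam‖ < ρ)
    (x : EuclideanSpace ℂ (Fin n))
    (v : ℕ → EuclideanSpace ℂ (Fin n))
    (hv : ∀ j : ℕ, v j = (lam^j / (Nat.factorial j : ℂ)) • x) :
    mvE (M lam) x = 0 ↔
      ((Summable fun j : ℕ => ρ^(j+1) / (Nat.factorial (j+1)) * ‖v j‖) ∧
       (∃ s : EuclideanSpace ℂ (Fin n),
         HasSum (fun j : ℕ => mvE (Nmat n M (j+1)) (v j)) s ∧ lam • s = v 0) ∧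
       (∀ j : ℕ, lam • ((1/((j:ℂ)+1)) • v j) = v (j+1))) := by
  have hdiff i i' : DifferentiableOn ℂ (fun z => M z i i') (Metric.ball 0 ρ) :=
    (hM i i').differentiableOn.mono Metric.ball_subset_closedBall
  have hsum : HasSum (fun j => mvE (Nmat n M (j + 1)) (v j))
      (lam⁻¹ • (x - mvE ((M 0)⁻¹ * M lam) x)) := by
    simpa only [hv] using hasSum_mvE_Nmat_succ hdiff hM0 hlam0 (mem_ball_zero_iff.mpr hlamρ) x
  have hsummable : Summable fun j : ℕ => ρ ^ (j + 1) / (j + 1)! * ‖v j‖ := by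
    simpa only [hv] using summable_pow_succ_div_factorial_mul_norm_smul ρ lam x
  have hshift (j : ℕ) : lam • ((1 / ((j : ℂ) + 1)) • v j) = v (j + 1) := by
    rw [hv, hv, smul_one_div_succ_smul_pow_div_factorial]
  have hv0 : v 0 = x := by simp [hv]
  have hlam_smul_sum : lam • lam⁻¹ • (x - mvE ((M 0)⁻¹ * M lam) x) = v 0 ↔ mvE (M lam) x = 0 := by
    rw [smul_inv_smul₀ hlam0, hv0, sub_eq_self, mvE_inv_mul_eq_zero_iff hM0]
  constructor
  · intro h
    exact ⟨hsummable, ⟨_, hsum, hlam_smul_sum.mpr h⟩, hshift⟩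
  · rintro ⟨-, ⟨s, hs, hlams⟩, -⟩
    rwa [hs.unique hsum, hlam_smul_sum] at hlams

/-- with `0 < |λ| < ρ`, `x ≠ 0`, and `v_j = (λ^{j-1}/(j-1)!) x`,
`(λ, x)` solves `M(λ)x = 0` if and only if `(1/λ, v)` is an eigenpair of `𝐀`
(with `v ∈ ℓ₁(ρ)`).  Blocks are indexed from `0`: `v j` is the paper's `v_{j+1}`. -/
theorem right_eigvec_equivalence
    (n : ℕ) (hn : 1 ≤ n) (ρ : ℝ) (hρ : 0 < ρ)
    (M : ℂ → Matrix (Fin n) (Fin n) ℂ)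
    (hM : ∀ i i', AnalyticOnNhd ℂ (fun z => M z i i') (Metric.closedBall (0:ℂ) ρ))
    (hM0 : IsUnit (M 0))
    (lam : ℂ) (hlam0 : lam ≠ 0) (hlamρ : ‖lam‖ < ρ)
    (x : EuclideanSpace ℂ (Fin n)) (hx : x ≠ 0)
    (v : ℕ → EuclideanSpace ℂ (Fin n))
    (hv : ∀ j : ℕ, v j = (lam^j / (Nat.factorial j : ℂ)) • x) :
    mvE (M lam) x = 0 ↔
      ((Summable fun j : ℕ => ρ^(j+1) / (Nat.factorial (j+1)) * ‖v j‖) ∧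
       (∃ s : EuclideanSpace ℂ (Fin n),
         HasSum (fun j : ℕ => mvE (Nmat n M (j+1)) (v j)) s ∧ lam • s = v 0) ∧
       (∀ j : ℕ, lam • ((1/((j:ℂ)+1)) • v j) = v (j+1))) :=
  right_eigvec_equivalence_general n ρ M hM hM0 lam hlam0 hlamρ x v hv
end

section
/- Suppose μ ∈ ℂ is such that λ := 1/μ satisfies |λ| < ρ, and w = (w_k)_{k≥1} ∈ ℓ₁(ρ) is a nonzero block vector satisfying λ·𝐀*w = w, i.e., λ·(N_k^*·w₁ + (1/k)·w_{k+1}) = w_k for all k ≥ 1. Then there exists a vector z ∈ ℂⁿ such that for every k ≥ 1 the series Σ_{j=1}^∞ ((k-1)!/(j+k-2)!)·λ^j·N_{j+k-1}^*·z converges and equals w_k. -/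
/-!
Take `z = w₀`. The eigen-equation says `w_m - (λ/(m+1)) w_{m+1} = λ N_{m+1}^* z`, so with
`b_j = (k!/(j+k)!) λ^j w_{j+k}` the `j`-th term of the series is `b_j - b_{j+1}`.
The `ℓ₁(ρ)` condition bounds `‖w_m‖` by `C (m+1)!/ρ^{m+1}`, hence
`‖b_j‖ ≤ C' (j+k+1) (|λ|/ρ)^j` and `(b_j)` is summable; the series therefore telescopes to
`b_0 = w_k`.
-/

open Matrix

open scoped Nat

theorem hasSum_sub_succ {G : Type*} [AddCommGroup G] [TopologicalSpace G]
    [IsTopologicalAddGroup G] {f : ℕ → G} (hf : Summable f) :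
    HasSum (fun n => f n - f (n + 1)) (f 0) := by
  simpa using hf.hasSum.sub ((hasSum_nat_add_iff' 1).2 hf.hasSum)

theorem le_tsum_div_of_summable_mul {a x : ℕ → ℝ} (ha : ∀ m, 0 < a m)
    (hx : ∀ m, 0 ≤ x m) (hs : Summable fun m => a m * x m) (m : ℕ) :
    x m ≤ (∑' i, a i * x i) / a m := by
  rw [le_div_iff₀ (ha m), mul_comm]
  exact hs.le_tsum m fun i _ => mul_nonneg (ha i).le (hx i)

theorem summable_add_succ_mul_geometric {q : ℝ} (hq0 : 0 ≤ q) (hq1 : q < 1) (k : ℕ) :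
    Summable fun j : ℕ => ((j : ℝ) + k + 1) * q ^ j := by
  have hjq : Summable fun j : ℕ => (j : ℝ) ^ 1 * q ^ j :=
    summable_pow_mul_geometric_of_norm_lt_one 1 (by rwa [Real.norm_of_nonneg hq0])
  refine (hjq.add ((summable_geometric_of_lt_one hq0 hq1).mul_left ((k : ℝ) + 1))).congr
    fun j => ?_
  ring

section

variable {𝕜 E : Type*} [RCLike 𝕜] [NormedAddCommGroup E] [NormedSpace 𝕜 E]
  [CompleteSpace E]

theorem summable_factorial_div_mul_pow_smul {ρ : ℝ} {lam : 𝕜}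
    (hlamρ : ‖lam‖ < ρ) {w : ℕ → E}
    (hw : Summable fun m : ℕ => ρ ^ (m + 1) / (m + 1)! * ‖w m‖) (k : ℕ) :
    Summable fun j : ℕ => ((k ! : 𝕜) / (j + k)! * lam ^ j) • w (j + k) := by
  have hρ : 0 < ρ := (norm_nonneg lam).trans_lt hlamρ
  set C := ∑' m : ℕ, ρ ^ (m + 1) / (m + 1)! * ‖w m‖
  set q := ‖lam‖ / ρ
  have hq1 : q < 1 := (div_lt_one hρ).2 hlamρ
  have hwC : ∀ m, ‖w m‖ ≤ C / (ρ ^ (m + 1) / (m + 1)!) :=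
    le_tsum_div_of_summable_mul (fun m => by positivity) (fun m => norm_nonneg _) hw
  refine .of_norm_bounded
    ((summable_add_succ_mul_geometric (by positivity) hq1 k).mul_left (C * k ! / ρ ^ (k + 1)))
    fun j => ?_
  calc ‖((k ! : 𝕜) / (j + k)! * lam ^ j) • w (j + k)‖
      = (k ! : ℝ) / (j + k)! * ‖lam‖ ^ j * ‖w (j + k)‖ := by
        simp [norm_smul, norm_mul, norm_div, norm_pow]
    _ ≤ (k ! : ℝ) / (j + k)! * ‖lam‖ ^ j * (C / (ρ ^ (j + k + 1) / (j + k + 1)!)) := by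
        gcongr
        exact hwC (j + k)
    _ = C * k ! / ρ ^ (k + 1) * (((j : ℝ) + k + 1) * q ^ j) := by
        have hpow : ρ ^ (j + k + 1) = ρ ^ j * ρ ^ (k + 1) := by ring
        rw [hpow, Nat.factorial_succ, div_pow]
        push_cast
        field_simp

theorem hasSum_factorial_div_smul_of_recurrence {ρ : ℝ} {lam : 𝕜} (hlamρ : ‖lam‖ < ρ)
    {w v : ℕ → E} (hw : Summable fun m : ℕ => ρ ^ (m + 1) / (m + 1)! * ‖w m‖)
    (hrec : ∀ m : ℕ, lam • (v m + (1 / ((m : 𝕜) + 1)) • w (m + 1)) = w m) (k : ℕ) :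
    HasSum (fun j : ℕ => ((k ! : 𝕜) / (j + k)! * lam ^ (j + 1)) • v (j + k)) (w k) := by
  set b : ℕ → E := fun j => ((k ! : 𝕜) / (j + k)! * lam ^ j) • w (j + k)
  have hb0 : b 0 = w k := by simp [b, Nat.factorial_ne_zero]
  have hstep : ∀ j,
      ((k ! : 𝕜) / (j + k)! * lam ^ (j + 1)) • v (j + k) = b j - b (j + 1) := by
    intro j
    have hcoef : (k ! : 𝕜) / (j + k + 1)! * lam ^ (j + 1)
        = (k ! : 𝕜) / (j + k)! * lam ^ j * (lam * (1 / (((j + k : ℕ) : 𝕜) + 1))) := by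
      rw [Nat.factorial_succ]
      push_cast
      field_simp
      ring
    simp only [b, show j + 1 + k = j + k + 1 by omega]
    rw [hcoef, ← smul_smul _ _ (w (j + k + 1)), ← smul_sub, ← hrec (j + k), smul_add,
      smul_smul lam, add_sub_cancel_right, smul_smul, pow_succ, mul_assoc]
  rw [← hb0]
  exact (hasSum_sub_succ (summable_factorial_div_mul_pow_smul hlamρ hw k)).congr_fun hstep

end

/-- Blocks are indexed from `0`: `w k` is the paper's `w_{k+1}`, and the paper's inner
summation index `j` is `j + 1` here. -/
theorem left_eigvec_structure_general
    (n : ℕ) (ρ : ℝ)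
    (M : ℂ → Matrix (Fin n) (Fin n) ℂ)
    (lam : ℂ) (hlamρ : ‖lam‖ < ρ)
    (w : ℕ → EuclideanSpace ℂ (Fin n))
    (hwl1 : Summable fun k : ℕ => ρ^(k+1) / (Nat.factorial (k+1)) * ‖w k‖)
    (heig : ∀ k : ℕ,
      lam • (mvE ((Nmat n M (k+1))ᴴ) (w 0) + (1/((k:ℂ)+1)) • w (k+1)) = w k) :
    ∃ z : EuclideanSpace ℂ (Fin n), ∀ k : ℕ,
      HasSum (fun j : ℕ =>
        ((Nat.factorial k : ℂ) / (Nat.factorial (j + k)) * lam^(j+1)) •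
          mvE ((Nmat n M (j + k + 1))ᴴ) z) (w k) :=
  ⟨w 0, hasSum_factorial_div_smul_of_recurrence
    (v := fun m => mvE ((Nmat n M (m + 1))ᴴ) (w 0)) hlamρ hwl1 heig⟩

/-- if `(μ, w)` with `w ∈ ℓ₁(ρ)`, `w ≠ 0`, satisfies `λ 𝐀* w = w`
where `λ = 1/μ`, `|λ| < ρ`, then there is `z ∈ ℂⁿ` such that for every `k ≥ 1`
the series `Σ_{j≥1} ((k-1)!/(j+k-2)!) λ^j N_{j+k-1}^* z` converges to `w_k`.
Blocks are indexed from `0`: `w k` is the paper's `w_{k+1}`, and the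
inner series index `j` of the paper corresponds to `j+1` below. -/
theorem left_eigvec_structure
    (n : ℕ) (hn : 1 ≤ n) (ρ : ℝ) (hρ : 0 < ρ)
    (M : ℂ → Matrix (Fin n) (Fin n) ℂ)
    (hM : ∀ i i', AnalyticOnNhd ℂ (fun z => M z i i') (Metric.closedBall (0:ℂ) ρ))
    (hM0 : IsUnit (M 0))
    (μ lam : ℂ) (hlam : lam = 1/μ) (hlamρ : ‖lam‖ < ρ)
    (w : ℕ → EuclideanSpace ℂ (Fin n)) (hwne : w ≠ 0)
    (hwl1 : Summable fun k : ℕ => ρ^(k+1) / (Nat.factorial (k+1)) * ‖w k‖)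
    (heig : ∀ k : ℕ,
      lam • (mvE ((Nmat n M (k+1))ᴴ) (w 0) + (1/((k:ℂ)+1)) • w (k+1)) = w k) :
    ∃ z : EuclideanSpace ℂ (Fin n), ∀ k : ℕ,
      HasSum (fun j : ℕ =>
        ((Nat.factorial k : ℂ) / (Nat.factorial (j + k)) * lam^(j+1)) •
          mvE ((Nmat n M (j + k + 1))ᴴ) z) (w k) :=
  left_eigvec_structure_general n ρ M lam hlamρ w hwl1 heig
end

section
/- Let x₁ ∈ ℂⁿ and let 𝐱 be the block vector whose first block is x₁ and all other blocks are zero. Fix an integer k ≥ 1 and define z₀ := (1/k!)·x₁ and, recursively, z_i := Σ_{ℓ=1}^{i} ((k-i+ℓ)!/((ℓ-1)!·(k-i)!))·N_ℓ·z_{i-ℓ} for i = 1, …, k. Then 𝐀^k 𝐱 is the block vector whose j-th block equals z_{k-j+1} for 1 ≤ j ≤ k+1 and is zero for j > k+1. -/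
open Matrix

/-- The operator `𝐀` acting on block vectors (blocks indexed from `0`, so the
`0`-th block is the paper's first block): `(𝐀w)₁ = Σ_{j≥1} N_j w_j` (a `tsum`,
which is a finite sum for finitely supported `w`) and `(𝐀w)_{j+1} = (1/j) w_j`. -/
noncomputable def Aop (n : ℕ) (M : ℂ → Matrix (Fin n) (Fin n) ℂ)
    (w : ℕ → EuclideanSpace ℂ (Fin n)) : ℕ → EuclideanSpace ℂ (Fin n)
  | 0 => ∑' j : ℕ, mvE (Nmat n M (j+1)) (w j)
  | (j+1) => (1/((j:ℂ)+1)) • w j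

/-!
With `y_i := (k - i)! • z_i` the recurrence for `z` loses its dependence on `k`:
`y_0 = x₁` and `y_i = ∑_{ℓ=1}^{i} N_ℓ y_{i-ℓ} / (ℓ-1)!`. By induction on `m ≤ k`, block `j` of
`𝐀^m 𝐱` is `y_{m-j} / j!` for `j ≤ m` and `0` beyond: the subdiagonal part of `𝐀` turns the
factor `1/j!` into `1/(j+1)!`, and its first row is exactly the recurrence for `y_{m+1}`.
At `m = k` this gives `y_{k-j} / j! = z_{k-j}`.
-/

lemma mvE_zero {n : ℕ} (A : Matrix (Fin n) (Fin n) ℂ) : mvE A 0 = 0 := by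
  simp [mvE]

lemma mvE_smul {n : ℕ} (A : Matrix (Fin n) (Fin n) ℂ) (c : ℂ) (x : EuclideanSpace ℂ (Fin n)) :
    mvE A (c • x) = c • mvE A x := by
  simp [mvE, Matrix.mulVec_smul]

section Aop

variable {n : ℕ} {M : ℂ → Matrix (Fin n) (Fin n) ℂ}

lemma Aop_zero_eq_sum_range {w : ℕ → EuclideanSpace ℂ (Fin n)} {m : ℕ}
    (hw : ∀ j, m < j → w j = 0) :
    Aop n M w 0 = ∑ j ∈ Finset.range (m + 1), mvE (Nmat n M (j + 1)) (w j) :=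
  tsum_eq_sum fun j hj => by
    rw [hw j (by simpa [Nat.lt_succ_iff] using hj), mvE_zero]

lemma Aop_succ (w : ℕ → EuclideanSpace ℂ (Fin n)) (j : ℕ) :
    Aop n M w (j + 1) = (1 / ((j : ℂ) + 1)) • w j :=
  rfl

lemma Aop_factorial_blocks_succ (y : ℕ → EuclideanSpace ℂ (Fin n)) (m : ℕ)
    (hy : y (m + 1) = ∑ ℓ ∈ Finset.Icc 1 (m + 1),
      (1 / ((ℓ - 1).factorial : ℂ)) • mvE (Nmat n M ℓ) (y (m + 1 - ℓ))) (j : ℕ) :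
    Aop n M (fun i => if i ≤ m then (1 / (i.factorial : ℂ)) • y (m - i) else 0) j =
      if j ≤ m + 1 then (1 / (j.factorial : ℂ)) • y (m + 1 - j) else 0 := by
  rcases j with _ | j
  · rw [Aop_zero_eq_sum_range (m := m) fun i hi => if_neg (by omega)]
    rw [if_pos (Nat.zero_le _), Nat.factorial_zero, Nat.cast_one, div_one, one_smul, Nat.sub_zero, hy,
      ← Finset.Ico_add_one_right_eq_Icc, Finset.sum_Ico_eq_sum_range]
    refine Finset.sum_congr (by simp) fun i hi => ?_
    have hi : i ≤ m := by simpa [Nat.lt_succ_iff] using hi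
    rw [if_pos hi, mvE_smul, Nat.add_comm 1 i, Nat.add_sub_cancel, show m + 1 - (i + 1) = m - i by omega]
  · rw [Aop_succ]
    by_cases hj : j ≤ m
    · rw [if_pos hj, if_pos (by omega), smul_smul, Nat.factorial_succ,
        show m + 1 - (j + 1) = m - j by omega]
      congr 1
      push_cast
      field_simp
    · rw [if_neg hj, if_neg (by omega), smul_zero]

lemma iterate_Aop_eq_factorial_blocks (x₁ : EuclideanSpace ℂ (Fin n)) (y : ℕ → EuclideanSpace ℂ (Fin n))
    (K : ℕ) (hy0 : y 0 = x₁)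
    (hy : ∀ i, 1 ≤ i → i ≤ K → y i = ∑ ℓ ∈ Finset.Icc 1 i,
      (1 / ((ℓ - 1).factorial : ℂ)) • mvE (Nmat n M ℓ) (y (i - ℓ))) :
    ∀ m ≤ K, (Aop n M)^[m] (fun j => if j = 0 then x₁ else 0) =
      fun j => if j ≤ m then (1 / (j.factorial : ℂ)) • y (m - j) else 0
  | 0, _ => by
    funext j
    rcases j with _ | j <;> simp [hy0]
  | m + 1, hm => by
    funext j
    rw [Function.iterate_succ_apply', iterate_Aop_eq_factorial_blocks x₁ y K hy0 hy m (by omega)]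
    exact Aop_factorial_blocks_succ y m (hy (m + 1) (by omega) hm) j

end Aop

lemma factorial_smul_recurrence {n : ℕ} (M : ℂ → Matrix (Fin n) (Fin n) ℂ) (k : ℕ)
    (z : ℕ → EuclideanSpace ℂ (Fin n))
    (hzi : ∀ i : ℕ, 1 ≤ i → i ≤ k →
      z i = ∑ ℓ ∈ Finset.Icc 1 i,
        ((Nat.factorial (k - i + ℓ) : ℂ) /
          ((Nat.factorial (ℓ - 1) : ℂ) * (Nat.factorial (k - i) : ℂ))) •
          mvE (Nmat n M ℓ) (z (i - ℓ)))
    (i : ℕ) (hi1 : 1 ≤ i) (hik : i ≤ k) :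
    ((k - i).factorial : ℂ) • z i = ∑ ℓ ∈ Finset.Icc 1 i,
      (1 / ((ℓ - 1).factorial : ℂ)) • mvE (Nmat n M ℓ) (((k - (i - ℓ)).factorial : ℂ) • z (i - ℓ)) := by
  rw [hzi i hi1 hik, Finset.smul_sum]
  refine Finset.sum_congr rfl fun ℓ hℓ => ?_
  have hℓi : ℓ ≤ i := (Finset.mem_Icc.mp hℓ).2
  rw [mvE_smul, smul_smul, smul_smul, show k - (i - ℓ) = k - i + ℓ by omega]
  congr 1
  have : ((k - i).factorial : ℂ) ≠ 0 := Nat.cast_ne_zero.mpr (k - i).factorial_ne_zero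
  field_simp

theorem Ak_action_on_e1_general
    (n : ℕ)
    (M : ℂ → Matrix (Fin n) (Fin n) ℂ)
    (x₁ : EuclideanSpace ℂ (Fin n))
    (bx : ℕ → EuclideanSpace ℂ (Fin n))
    (hbx : ∀ j : ℕ, bx j = if j = 0 then x₁ else 0)
    (k : ℕ)
    (z : ℕ → EuclideanSpace ℂ (Fin n))
    (hz0 : z 0 = (1/(Nat.factorial k : ℂ)) • x₁)
    (hzi : ∀ i : ℕ, 1 ≤ i → i ≤ k →
      z i = ∑ ℓ ∈ Finset.Icc 1 i,
        ((Nat.factorial (k - i + ℓ) : ℂ) /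
          ((Nat.factorial (ℓ - 1) : ℂ) * (Nat.factorial (k - i) : ℂ))) •
          mvE (Nmat n M ℓ) (z (i - ℓ))) :
    ∀ j : ℕ, (Aop n M)^[k] bx j = if j ≤ k then z (k - j) else 0 := by
  have hkfac : (k.factorial : ℂ) ≠ 0 := Nat.cast_ne_zero.mpr k.factorial_ne_zero
  have hy0 : ((k - 0).factorial : ℂ) • z 0 = x₁ := by
    rw [hz0, smul_smul, Nat.sub_zero, mul_one_div_cancel hkfac, one_smul]
  have hblocks := iterate_Aop_eq_factorial_blocks x₁ (fun i => ((k - i).factorial : ℂ) • z i) k hy0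
    (factorial_smul_recurrence M k z hzi) k le_rfl
  intro j
  rw [funext hbx, hblocks]
  dsimp only
  split_ifs with hj
  · rw [smul_smul, Nat.sub_sub_self hj, one_div_mul_cancel (Nat.cast_ne_zero.mpr j.factorial_ne_zero),
      one_smul]
  · rfl

/-- the structure of `𝐀^k 𝐱` for `𝐱 = e₁ ⊗ x₁`.
Blocks are indexed from `0`: the paper's `j`-th block (`1 ≤ j ≤ k+1`) is the
block of index `j-1` below, so block `j` equals `z_{k-j}` for `j ≤ k`. -/
theorem Ak_action_on_e1
    (n : ℕ) (hn : 1 ≤ n) (ρ : ℝ) (hρ : 0 < ρ)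
    (M : ℂ → Matrix (Fin n) (Fin n) ℂ)
    (hM : ∀ i i', AnalyticOnNhd ℂ (fun z => M z i i') (Metric.closedBall (0:ℂ) ρ))
    (hM0 : IsUnit (M 0))
    (x₁ : EuclideanSpace ℂ (Fin n))
    (bx : ℕ → EuclideanSpace ℂ (Fin n))
    (hbx : ∀ j : ℕ, bx j = if j = 0 then x₁ else 0)
    (k : ℕ) (hk : 1 ≤ k)
    (z : ℕ → EuclideanSpace ℂ (Fin n))
    (hz0 : z 0 = (1/(Nat.factorial k : ℂ)) • x₁)
    (hzi : ∀ i : ℕ, 1 ≤ i → i ≤ k →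
      z i = ∑ ℓ ∈ Finset.Icc 1 i,
        ((Nat.factorial (k - i + ℓ) : ℂ) /
          ((Nat.factorial (ℓ - 1) : ℂ) * (Nat.factorial (k - i) : ℂ))) •
          mvE (Nmat n M ℓ) (z (i - ℓ))) :
    ∀ j : ℕ, (Aop n M)^[k] bx j = if j ≤ k then z (k - j) else 0 :=
  Ak_action_on_e1_general n M x₁ bx hbx k z hz0 hzi
end

section
/- Let ỹ₁ ∈ ℂⁿ and let 𝐲̃ be the block vector whose m-th block is N_m^*·ỹ₁ for every m ≥ 1. Fix an integer k ≥ 1 and define z̃₀ := ỹ₁ and, recursively, z̃_i := Σ_{ℓ=1}^{i} (1/(ℓ-1)!)·N_ℓ^*·z̃_{i-ℓ} for i = 1, …, k. Then (𝐀*)^k 𝐲̃ is the block vector whose m-th block equals Σ_{j=1}^{k+1} ((m-1)!/(j+m-2)!)·N_{j+m-1}^*·z̃_{k-j+1} for every m ≥ 1. -/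
open Matrix

/-- The adjoint operator `𝐀*` acting on block vectors (blocks indexed from `0`,
so the block of index `j` is the paper's block `j+1`):
`(𝐀*w)_j = N_j^* w₁ + (1/j) w_{j+1}` for `j ≥ 1`. -/
noncomputable def Astar (n : ℕ) (M : ℂ → Matrix (Fin n) (Fin n) ℂ)
    (w : ℕ → EuclideanSpace ℂ (Fin n)) : ℕ → EuclideanSpace ℂ (Fin n) :=
  fun j => mvE ((Nmat n M (j+1))ᴴ) (w 0) + (1/((j:ℂ)+1)) • w (j+1)

/-!
Write `B j` for the action of `N_{j+1}^*`. If every block of `w` is a factorial-weighted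
convolution `w_m = ∑_{j ≤ K} m!/(j+m)! · B_{j+m} z_{K-j}`, then so is every block of `𝐀* w`,
with `K + 1` in place of `K`: the term `(1/(m+1)) w_{m+1}` supplies the terms `j ≥ 1` (since
`(m+1)!/(m+1) = m!`), and the term `B_m w_0` supplies `j = 0`, because `w_0` is exactly the
recursion defining `z_{K+1}`.
-/

open Finset Nat

section BlockShiftAdjoint

variable (𝕜 : Type*) {V : Type*} [Field 𝕜] [CharZero 𝕜] [AddCommGroup V] [Module 𝕜 V]

noncomputable def blockShiftAdjoint (B : ℕ → V → V) (w : ℕ → V) : ℕ → V :=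
  fun j => B j (w 0) + (1 / ((j : 𝕜) + 1)) • w (j + 1)

noncomputable def factorialConv (B : ℕ → V → V) (z : ℕ → V) (K m : ℕ) : V :=
  ∑ j ∈ range (K + 1), ((m ! : 𝕜) / ((j + m) ! : 𝕜)) • B (j + m) (z (K - j))

variable {𝕜}

lemma factorialConv_zero_left (B : ℕ → V → V) (z : ℕ → V) (m : ℕ) :
    factorialConv 𝕜 B z 0 m = B m (z 0) := by
  simp [factorialConv, div_self (cast_ne_zero.mpr (factorial_ne_zero m) : (m ! : 𝕜) ≠ 0)]

omit [CharZero 𝕜] in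
lemma factorialConv_zero_right (B : ℕ → V → V) (z : ℕ → V) (K : ℕ) :
    factorialConv 𝕜 B z K 0 = ∑ j ∈ range (K + 1), (1 / (j ! : 𝕜)) • B j (z (K - j)) := by
  simp [factorialConv]

lemma one_div_succ_mul_factorial_div (j m : ℕ) :
    1 / ((m : 𝕜) + 1) * ((m + 1) ! / (j + (m + 1)) ! : 𝕜) = m ! / (j + 1 + m) ! := by
  have hm : (m : 𝕜) + 1 ≠ 0 := cast_add_one_ne_zero m
  rw [factorial_succ, show j + (m + 1) = j + 1 + m by omega, cast_mul, cast_succ]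
  field_simp

lemma blockShiftAdjoint_factorialConv (B : ℕ → V → V) (z : ℕ → V) (K : ℕ)
    (hz : z (K + 1) = factorialConv 𝕜 B z K 0) :
    blockShiftAdjoint 𝕜 B (factorialConv 𝕜 B z K) = factorialConv 𝕜 B z (K + 1) := by
  funext m
  rw [blockShiftAdjoint, ← hz, factorialConv, factorialConv, smul_sum, sum_range_succ' _ (K + 1),
    add_comm]
  congr 1
  · refine sum_congr rfl fun j _ => ?_
    rw [smul_smul, one_div_succ_mul_factorial_div, Nat.add_sub_add_right,
      show j + (m + 1) = j + 1 + m by omega]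
  · simp [div_self (cast_ne_zero.mpr (factorial_ne_zero m) : (m ! : 𝕜) ≠ 0)]

lemma iterate_blockShiftAdjoint (B : ℕ → V → V) (z : ℕ → V) (k : ℕ)
    (hz : ∀ i < k, z (i + 1) = ∑ j ∈ range (i + 1), (1 / (j ! : 𝕜)) • B j (z (i - j))) :
    ∀ K ≤ k, (blockShiftAdjoint 𝕜 B)^[K] (fun m => B m (z 0)) = factorialConv 𝕜 B z K := by
  intro K hK
  induction K with
  | zero => exact funext fun m => (factorialConv_zero_left B z m).symm
  | succ K ih =>
    rw [Function.iterate_succ_apply', ih (by omega)]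
    exact blockShiftAdjoint_factorialConv B z K
      ((hz K (by omega)).trans (factorialConv_zero_right B z K).symm)

end BlockShiftAdjoint

lemma sum_Icc_one_eq_sum_range {M : Type*} [AddCommMonoid M] (f : ℕ → M) (i : ℕ) :
    ∑ ℓ ∈ Icc 1 i, f ℓ = ∑ j ∈ range i, f (j + 1) := by
  rw [range_eq_Ico, sum_Ico_add', ← Ico_add_one_right_eq_Icc, zero_add]

lemma Astar_eq_blockShiftAdjoint (n : ℕ) (M : ℂ → Matrix (Fin n) (Fin n) ℂ) :
    Astar n M = blockShiftAdjoint ℂ fun j => mvE ((Nmat n M (j + 1))ᴴ) :=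
  rfl

/-- Blocks are indexed from `0` (block `m` below is the paper's block `m+1`), and
the sum index `j` below corresponds to the paper's `j+1 ∈ {1,…,k+1}`. -/
theorem Astark_action_general
    (n : ℕ)
    (M : ℂ → Matrix (Fin n) (Fin n) ℂ)
    (y₁ : EuclideanSpace ℂ (Fin n))
    (by' : ℕ → EuclideanSpace ℂ (Fin n))
    (hby : ∀ m : ℕ, by' m = mvE ((Nmat n M (m+1))ᴴ) y₁)
    (k : ℕ)
    (zt : ℕ → EuclideanSpace ℂ (Fin n))
    (hzt0 : zt 0 = y₁)
    (hzti : ∀ i : ℕ, 1 ≤ i → i ≤ k →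
      zt i = ∑ ℓ ∈ Finset.Icc 1 i,
        (1/(Nat.factorial (ℓ - 1) : ℂ)) • mvE ((Nmat n M ℓ)ᴴ) (zt (i - ℓ))) :
    ∀ m : ℕ, (Astar n M)^[k] by' m =
      ∑ j ∈ Finset.range (k+1),
        ((Nat.factorial m : ℂ) / (Nat.factorial (j + m) : ℂ)) •
          mvE ((Nmat n M (j + m + 1))ᴴ) (zt (k - j)) := by
  have hrec : ∀ i < k, zt (i + 1) = ∑ j ∈ range (i + 1),
      (1 / (j ! : ℂ)) • mvE ((Nmat n M (j + 1))ᴴ) (zt (i - j)) := by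
    intro i hi
    rw [hzti (i + 1) (by omega) hi, sum_Icc_one_eq_sum_range]
    simp only [Nat.add_sub_cancel, Nat.add_sub_add_right]
  have hby' : by' = fun m => mvE ((Nmat n M (m + 1))ᴴ) (zt 0) :=
    funext fun m => by rw [hby, hzt0]
  intro m
  rw [hby', Astar_eq_blockShiftAdjoint, iterate_blockShiftAdjoint _ zt k hrec k le_rfl]
  rfl

/-- the structure of `(𝐀*)^k 𝐲̃` for `𝐲̃ = 𝐍^* ỹ₁`.
Blocks are indexed from `0` (block `m` below is the paper's block `m+1`), and
the sum index `j` below corresponds to the paper's `j+1 ∈ {1,…,k+1}`. -/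
theorem Astark_action
    (n : ℕ) (hn : 1 ≤ n) (ρ : ℝ) (hρ : 0 < ρ)
    (M : ℂ → Matrix (Fin n) (Fin n) ℂ)
    (hM : ∀ i i', AnalyticOnNhd ℂ (fun z => M z i i') (Metric.closedBall (0:ℂ) ρ))
    (hM0 : IsUnit (M 0))
    (y₁ : EuclideanSpace ℂ (Fin n))
    (by' : ℕ → EuclideanSpace ℂ (Fin n))
    (hby : ∀ m : ℕ, by' m = mvE ((Nmat n M (m+1))ᴴ) y₁)
    (k : ℕ) (hk : 1 ≤ k)
    (zt : ℕ → EuclideanSpace ℂ (Fin n))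
    (hzt0 : zt 0 = y₁)
    (hzti : ∀ i : ℕ, 1 ≤ i → i ≤ k →
      zt i = ∑ ℓ ∈ Finset.Icc 1 i,
        (1/(Nat.factorial (ℓ - 1) : ℂ)) • mvE ((Nmat n M ℓ)ᴴ) (zt (i - ℓ))) :
    ∀ m : ℕ, (Astar n M)^[k] by' m =
      ∑ j ∈ Finset.range (k+1),
        ((Nat.factorial m : ℂ) / (Nat.factorial (j + m) : ℂ)) •
          mvE ((Nmat n M (j + m + 1))ᴴ) (zt (k - j)) :=
  Astark_action_general n M y₁ by' hby k zt hzt0 hzti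
end

section
/- Let k_ã ≥ 1 be an integer, let ã₁, …, ã_{k_ã} ∈ ℂⁿ, and let 𝐚̃ be the block vector whose m-th block is Σ_{j=1}^{k_ã} ((m-1)!/(j+m-2)!)·N_{j+m-1}^*·ã_j for every m ≥ 1. Define b̃₁ := Σ_{j=1}^{k_ã} (1/(j-1)!)·N_j^*·ã_j and b̃_j := ã_{j-1} for 2 ≤ j ≤ k_ã + 1. Then 𝐀*𝐚̃ is the block vector whose m-th block equals Σ_{j=1}^{k_ã+1} ((m-1)!/(j+m-2)!)·N_{j+m-1}^*·b̃_j for every m ≥ 1. -/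
/-!
Block `m` of `𝐀*𝐚̃` is `N_{m+1}^*` applied to block `0` of `𝐚̃`, plus `1/(m+1)` times block `m+1`.
On the right-hand side, the term `j = 0` of the sum is `N_{m+1}^* b̃₀`, and block `0` of `𝐚̃` is
exactly `b̃₀`; after shifting the index, the remaining terms are `1/(m+1)` times block `m+1` of `𝐚̃`,
because `(1/(m+1)) · (m+1)!/(j+m+1)! = m!/(j+1+m)!`.
-/

open Matrix

noncomputable def leftTypeBlock {n : ℕ} (N : ℕ → Matrix (Fin n) (Fin n) ℂ)
    (a : ℕ → EuclideanSpace ℂ (Fin n)) (k m : ℕ) : EuclideanSpace ℂ (Fin n) :=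
  ∑ j ∈ Finset.range k,
    ((Nat.factorial m : ℂ) / (Nat.factorial (j + m) : ℂ)) • mvE ((N (j + m + 1))ᴴ) (a j)

lemma one_div_succ_mul_factorial_div_factorial (j m : ℕ) :
    1 / ((m : ℂ) + 1) * ((Nat.factorial (m + 1) : ℂ) / (Nat.factorial (j + (m + 1)) : ℂ)) =
      (Nat.factorial m : ℂ) / (Nat.factorial (j + 1 + m) : ℂ) := by
  rw [Nat.factorial_succ, show j + (m + 1) = j + 1 + m by omega]
  have hm : (m : ℂ) + 1 ≠ 0 := Nat.cast_add_one_ne_zero m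
  push_cast
  field_simp

section leftTypeBlock

variable {n : ℕ} (N : ℕ → Matrix (Fin n) (Fin n) ℂ) (a : ℕ → EuclideanSpace ℂ (Fin n)) (k : ℕ)

lemma leftTypeBlock_zero :
    leftTypeBlock N a k 0 =
      ∑ j ∈ Finset.range k, (1 / (Nat.factorial j : ℂ)) • mvE ((N (j + 1))ᴴ) (a j) := by
  simp [leftTypeBlock]

lemma leftTypeBlock_succ (m : ℕ) :
    leftTypeBlock N a (k + 1) m =
      (1 / ((m : ℂ) + 1)) • leftTypeBlock N (fun j => a (j + 1)) k (m + 1) +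
        mvE ((N (m + 1))ᴴ) (a 0) := by
  have hm : (Nat.factorial m : ℂ) ≠ 0 := by exact_mod_cast Nat.factorial_ne_zero m
  rw [leftTypeBlock, Finset.sum_range_succ', leftTypeBlock, Finset.smul_sum]
  simp only [Nat.zero_add, div_self hm, one_smul, smul_smul,
    one_div_succ_mul_factorial_div_factorial]
  simp only [show ∀ j, j + (m + 1) = j + 1 + m from fun j => by omega]

end leftTypeBlock

theorem Astar_action_on_left_type_general
    (n : ℕ)
    (M : ℂ → Matrix (Fin n) (Fin n) ℂ)
    (kat : ℕ)
    (at' : ℕ → EuclideanSpace ℂ (Fin n))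
    (At : ℕ → EuclideanSpace ℂ (Fin n))
    (hAt : ∀ m : ℕ, At m = ∑ j ∈ Finset.range kat,
      ((Nat.factorial m : ℂ) / (Nat.factorial (j + m) : ℂ)) •
        mvE ((Nmat n M (j + m + 1))ᴴ) (at' j))
    (bt : ℕ → EuclideanSpace ℂ (Fin n))
    (hbt0 : bt 0 = ∑ j ∈ Finset.range kat,
      (1/(Nat.factorial j : ℂ)) • mvE ((Nmat n M (j+1))ᴴ) (at' j))
    (hbti : ∀ j : ℕ, 1 ≤ j → j ≤ kat → bt j = at' (j-1)) :
    ∀ m : ℕ, Astar n M At m =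
      ∑ j ∈ Finset.range (kat+1),
        ((Nat.factorial m : ℂ) / (Nat.factorial (j + m) : ℂ)) •
          mvE ((Nmat n M (j + m + 1))ᴴ) (bt j) := by
  intro m
  have hAt' : At = leftTypeBlock (Nmat n M) at' kat := funext hAt
  have hb : leftTypeBlock (Nmat n M) at' kat =
      leftTypeBlock (Nmat n M) (fun j => bt (j + 1)) kat := by
    funext m'
    refine Finset.sum_congr rfl fun j hj => ?_
    simp only [hbti (j + 1) (by omega) (Finset.mem_range.mp hj), Nat.add_sub_cancel]
  have hAt0 : At 0 = bt 0 := by rw [hbt0, hAt', leftTypeBlock_zero]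
  change _ = leftTypeBlock (Nmat n M) bt (kat + 1) m
  rw [leftTypeBlock_succ, Astar, hAt0, add_comm, hAt', hb]

/-- the action of `𝐀*` on a block vector of "left" type.
Blocks are indexed from `0` (block `m` is the paper's block `m+1`); the
representing vectors `ã_j` are `at j` for `j < k_ã`, the `m`-th block of `𝐚̃` is
`Σ_{j<k_ã} (m!/(j+m)!) N_{j+m+1}^* ã_j`, and the new representing vectors are
`b̃₀ = Σ_{j<k_ã} (1/j!) N_{j+1}^* ã_j` and `b̃_j = ã_{j-1}` for `1 ≤ j ≤ k_ã`. -/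
theorem Astar_action_on_left_type
    (n : ℕ) (hn : 1 ≤ n) (ρ : ℝ) (hρ : 0 < ρ)
    (M : ℂ → Matrix (Fin n) (Fin n) ℂ)
    (hM : ∀ i i', AnalyticOnNhd ℂ (fun z => M z i i') (Metric.closedBall (0:ℂ) ρ))
    (hM0 : IsUnit (M 0))
    (kat : ℕ) (hkat : 1 ≤ kat)
    (at' : ℕ → EuclideanSpace ℂ (Fin n))
    (At : ℕ → EuclideanSpace ℂ (Fin n))
    (hAt : ∀ m : ℕ, At m = ∑ j ∈ Finset.range kat,
      ((Nat.factorial m : ℂ) / (Nat.factorial (j + m) : ℂ)) •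
        mvE ((Nmat n M (j + m + 1))ᴴ) (at' j))
    (bt : ℕ → EuclideanSpace ℂ (Fin n))
    (hbt0 : bt 0 = ∑ j ∈ Finset.range kat,
      (1/(Nat.factorial j : ℂ)) • mvE ((Nmat n M (j+1))ᴴ) (at' j))
    (hbti : ∀ j : ℕ, 1 ≤ j → j ≤ kat → bt j = at' (j-1)) :
    ∀ m : ℕ, Astar n M At m =
      ∑ j ∈ Finset.range (kat+1),
        ((Nat.factorial m : ℂ) / (Nat.factorial (j + m) : ℂ)) •
          mvE ((Nmat n M (j + m + 1))ᴴ) (bt j) :=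
  Astar_action_on_left_type_general n M kat at' At hAt bt hbt0 hbti
end

section
/- Let λ ∈ ℂ and let w = (w_j)_{j≥1} be a block vector satisfying λ·(N_j^*·w₁ + (1/j)·w_{j+1}) = w_j for all j ≥ 1. Then for every integer k ≥ 1, w₁ = Σ_{j=1}^{k} (λ^j/(j-1)!)·N_j^*·w₁ + (λ^k/k!)·w_{k+1}. -/
open Matrix

theorem head_eq_sum_add_of_smul_add_eq {𝕜 E : Type*} [Field 𝕜] [CharZero 𝕜]
    [AddCommGroup E] [Module 𝕜 E] (lam : 𝕜) (a w : ℕ → E)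
    (h : ∀ j : ℕ, lam • (a j + (1 / ((j : 𝕜) + 1)) • w (j + 1)) = w j) (k : ℕ) :
    w 0 = (∑ j ∈ Finset.range k, (lam ^ (j + 1) / (j.factorial : 𝕜)) • a j) +
      (lam ^ k / (k.factorial : 𝕜)) • w k := by
  induction k with
  | zero => simp
  | succ k ih =>
    -- one more unrolling step: `(λ^k/k!) · λ/(k+1) = λ^(k+1)/(k+1)!`
    have hstep : (lam ^ k / (k.factorial : 𝕜)) • w k =
        (lam ^ (k + 1) / (k.factorial : 𝕜)) • a k +
          (lam ^ (k + 1) / ((k + 1).factorial : 𝕜)) • w (k + 1) := by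
      rw [← h k, smul_add, smul_add, smul_smul, smul_smul, smul_smul, Nat.factorial_succ]
      congr 2
      · ring
      · push_cast
        field_simp
        ring
    rw [ih, hstep, Finset.sum_range_succ, add_assoc]

theorem partial_sum_identity_general
    (n : ℕ)
    (M : ℂ → Matrix (Fin n) (Fin n) ℂ)
    (lam : ℂ)
    (w : ℕ → EuclideanSpace ℂ (Fin n))
    (heig : ∀ j : ℕ,
      lam • (mvE ((Nmat n M (j+1))ᴴ) (w 0) + (1/((j:ℂ)+1)) • w (j+1)) = w j) :
    ∀ k : ℕ, 1 ≤ k →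
      w 0 = (∑ j ∈ Finset.range k,
          (lam^(j+1) / (Nat.factorial j : ℂ)) • mvE ((Nmat n M (j+1))ᴴ) (w 0)) +
        (lam^k / (Nat.factorial k : ℂ)) • w k :=
  fun k _ => head_eq_sum_add_of_smul_add_eq lam (fun j => mvE ((Nmat n M (j+1))ᴴ) (w 0)) w heig k

/-- if `λ 𝐀* w = w` blockwise, then for every `k ≥ 1`,
`w₁ = Σ_{j=1}^{k} (λ^j/(j-1)!) N_j^* w₁ + (λ^k/k!) w_{k+1}`.
Blocks are indexed from `0` (`w j` is the paper's `w_{j+1}`), and the sum index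
`j` below corresponds to the paper's `j+1 ∈ {1,…,k}`. -/
theorem partial_sum_identity
    (n : ℕ) (hn : 1 ≤ n) (ρ : ℝ) (hρ : 0 < ρ)
    (M : ℂ → Matrix (Fin n) (Fin n) ℂ)
    (hM : ∀ i i', AnalyticOnNhd ℂ (fun z => M z i i') (Metric.closedBall (0:ℂ) ρ))
    (hM0 : IsUnit (M 0))
    (lam : ℂ)
    (w : ℕ → EuclideanSpace ℂ (Fin n))
    (heig : ∀ j : ℕ,
      lam • (mvE ((Nmat n M (j+1))ᴴ) (w 0) + (1/((j:ℂ)+1)) • w (j+1)) = w j) :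
    ∀ k : ℕ, 1 ≤ k →
      w 0 = (∑ j ∈ Finset.range k,
          (lam^(j+1) / (Nat.factorial j : ℂ)) • mvE ((Nmat n M (j+1))ᴴ) (w 0)) +
        (lam^k / (Nat.factorial k : ℂ)) • w k :=
  partial_sum_identity_general n M lam w heig
end

section
/- Suppose M_ρ > 0 is a constant such that the operator norm satisfies ‖M^{(j)}(0)‖ ≤ M_ρ·j!/ρ^j for all j ≥ 1. Let λ ∈ ℂ with |λ| < ρ and let z ∈ ℂⁿ. Define the block vector w by w_k := Σ_{j=1}^∞ ((k-1)!/(j+k-2)!)·λ^j·N_{j+k-1}^*·z for k ≥ 1. Then each of these series converges absolutely and w ∈ ℓ₁(ρ), i.e., Σ_{k=1}^∞ (ρ^k/k!)·‖w_k‖ < ∞. -/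
open Matrix

/-- The operator norm of a matrix, viewed as an operator on Euclidean space. -/
noncomputable def opNormE {n : ℕ} (A : Matrix (Fin n) (Fin n) ℂ) : ℝ :=
  ‖Matrix.toEuclideanCLM (𝕜 := ℂ) A‖

/-!
Analyticity on the closed disk of radius `ρ` extends to a disk of some radius `r > ρ`, where
Cauchy's estimates give `‖M^{(m)}(0)‖ ≤ C m!/r^m`. As `m!/m = (m-1)!`, the `j`-th term of `w_k`
is then at most a constant times `k!/r^{k+1} (|λ|/r)^j`, so each series converges and
`‖w_k‖ = O(k!/r^k)`; the weights `ρ^k/k!` turn this into a geometric series in `ρ/r`. (Estimates at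
radius `ρ` itself would only give weighted terms of order `1/k`.)
-/

open Metric
open scoped Nat

section Cauchy

variable {E : Type*} [NormedAddCommGroup E] [NormedSpace ℂ E] [CompleteSpace E]

theorem AnalyticOnNhd.exists_gt_closedBall {f : ℂ → E} {c : ℂ} {ρ : ℝ} (hρ : 0 ≤ ρ)
    (hf : AnalyticOnNhd ℂ f (closedBall c ρ)) :
    ∃ R > ρ, AnalyticOnNhd ℂ f (closedBall c R) := by
  obtain ⟨δ, hδ, hsub⟩ := (isCompact_closedBall c ρ).exists_cthickening_subset_open
    (isOpen_analyticAt ℂ f) hf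
  rw [cthickening_closedBall hδ.le hρ] at hsub
  exact ⟨ρ + δ, by linarith, fun z hz => hsub (by rwa [add_comm])⟩

theorem AnalyticOnNhd.exists_norm_iteratedDeriv_le {f : ℂ → E} {c : ℂ}
    {R : ℝ} (hR : 0 < R) (hf : AnalyticOnNhd ℂ f (closedBall c R)) :
    ∃ C, ∀ m : ℕ, ‖iteratedDeriv m f c‖ ≤ m ! * C / R ^ m := by
  obtain ⟨C, hC⟩ := (isCompact_sphere c R).exists_bound_of_continuousOn
    (hf.continuousOn.mono sphere_subset_closedBall)
  exact ⟨C, fun m => Complex.norm_iteratedDeriv_le_of_forall_mem_sphere_norm_le m hR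
    (hf.differentiableOn.diffContOnCl_ball subset_rfl) hC⟩

end Cauchy

section OpNorm

variable {n : ℕ}

open scoped Matrix.Norms.L2Operator

lemma opNormE_eq (A : Matrix (Fin n) (Fin n) ℂ) : opNormE A = ‖A‖ := rfl

lemma norm_mvE_le (A : Matrix (Fin n) (Fin n) ℂ) (x : EuclideanSpace ℂ (Fin n)) :
    ‖mvE A x‖ ≤ opNormE A * ‖x‖ :=
  (Matrix.toEuclideanCLM (𝕜 := ℂ) A).le_opNorm x

lemma EuclideanSpace.norm_le_sum_norm {ι 𝕜 : Type*} [Fintype ι] [RCLike 𝕜]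
    (y : EuclideanSpace 𝕜 ι) : ‖y‖ ≤ ∑ i, ‖y i‖ := by
  rw [EuclideanSpace.norm_eq, Real.sqrt_le_left (by positivity)]
  exact Finset.sum_sq_le_sq_sum_of_nonneg fun i _ => norm_nonneg _

lemma opNormE_le_sum_norm_entries (A : Matrix (Fin n) (Fin n) ℂ) :
    opNormE A ≤ ∑ i, ∑ j, ‖A i j‖ := by
  refine ContinuousLinearMap.opNorm_le_bound _ (by positivity) fun x => ?_
  calc ‖mvE A x‖ ≤ ∑ i, ‖∑ j, A i j * x j‖ := EuclideanSpace.norm_le_sum_norm _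
    _ ≤ ∑ i, ∑ j, ‖A i j‖ * ‖x‖ := by
      gcongr with i
      refine (norm_sum_le _ _).trans (Finset.sum_le_sum fun j _ => ?_)
      rw [norm_mul]
      gcongr
      exact PiLp.norm_apply_le x j
    _ = (∑ i, ∑ j, ‖A i j‖) * ‖x‖ := by simp only [Finset.sum_mul]

lemma opNormE_conjTranspose (A : Matrix (Fin n) (Fin n) ℂ) : opNormE Aᴴ = opNormE A :=
  Matrix.l2_opNorm_conjTranspose A

lemma opNormE_Nmat_succ_le (M : ℂ → Matrix (Fin n) (Fin n) ℂ) {m : ℕ} {C r : ℝ}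
    (h : opNormE (Mder n M (m + 1)) ≤ (m + 1)! * C / r ^ (m + 1)) :
    opNormE (Nmat n M (m + 1)) ≤ opNormE (M 0)⁻¹ * (m ! * C / r ^ (m + 1)) := by
  have hfac : ((m + 1)! : ℝ) = (m + 1) * m ! := by push_cast [Nat.factorial_succ]; ring
  rw [hfac] at h
  rw [opNormE_eq, Nmat, norm_smul]
  calc ‖-(1 / ((m + 1 : ℕ) : ℂ))‖ * ‖(M 0)⁻¹ * Mder n M (m + 1)‖
      ≤ (m + 1 : ℝ)⁻¹ * (‖(M 0)⁻¹‖ * ‖Mder n M (m + 1)‖) := by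
        rw [norm_neg, one_div, norm_inv, Complex.norm_natCast]
        push_cast
        gcongr
        exact Matrix.l2_opNorm_mul _ _
    _ ≤ (m + 1 : ℝ)⁻¹ * (‖(M 0)⁻¹‖ * ((m + 1) * m ! * C / r ^ (m + 1))) := by
        gcongr
        exact h
    _ = ‖(M 0)⁻¹‖ * (m ! * C / r ^ (m + 1)) := by field_simp

end OpNorm

theorem exists_opNormE_Mder_le {n : ℕ} {ρ : ℝ} (hρ : 0 ≤ ρ) (M : ℂ → Matrix (Fin n) (Fin n) ℂ)
    (hM : ∀ i i', AnalyticOnNhd ℂ (fun z => M z i i') (closedBall 0 ρ)) :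
    ∃ r > ρ, ∃ C, ∀ m : ℕ, opNormE (Mder n M m) ≤ m ! * C / r ^ m := by
  obtain ⟨r, hρr, hF⟩ := AnalyticOnNhd.exists_gt_closedBall hρ
    (AnalyticOnNhd.pi (f := fun (q : Fin n × Fin n) z => M z q.1 q.2) fun q => hM q.1 q.2)
  choose C hC using fun q => (analyticOnNhd_pi_iff.1 hF q).exists_norm_iteratedDeriv_le
    (hρ.trans_lt hρr)
  refine ⟨r, hρr, ∑ q, C q, fun m => ?_⟩
  calc opNormE (Mder n M m) ≤ ∑ i, ∑ i', ‖Mder n M m i i'‖ := opNormE_le_sum_norm_entries _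
    _ ≤ ∑ i, ∑ i', m ! * C (i, i') / r ^ m := by gcongr with i _ i' _; exact hC (i, i') m
    _ = m ! * (∑ q, C q) / r ^ m := by
      simp only [Fintype.sum_prod_type, Finset.mul_sum, Finset.sum_div]

noncomputable def wSummand (n : ℕ) (M : ℂ → Matrix (Fin n) (Fin n) ℂ) (lam : ℂ)
    (z : EuclideanSpace ℂ (Fin n)) (k j : ℕ) : EuclideanSpace ℂ (Fin n) :=
  ((k ! : ℂ) / (j + k)! * lam ^ (j + 1)) • mvE ((Nmat n M (j + k + 1))ᴴ) z

lemma norm_wSummand_le {n : ℕ} (M : ℂ → Matrix (Fin n) (Fin n) ℂ) {C r : ℝ} (hr : 0 < r)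
    (hC : ∀ m : ℕ, opNormE (Mder n M m) ≤ m ! * C / r ^ m) (lam : ℂ)
    (z : EuclideanSpace ℂ (Fin n)) (k j : ℕ) :
    ‖wSummand n M lam z k j‖ ≤
      opNormE (M 0)⁻¹ * C * ‖z‖ * ‖lam‖ * k ! / r ^ (k + 1) * (‖lam‖ / r) ^ j := by
  have hN := opNormE_Nmat_succ_le M (hC (j + k + 1))
  rw [wSummand, norm_smul]
  calc _ ≤ ‖(k ! : ℂ) / (j + k)! * lam ^ (j + 1)‖ * (opNormE (Nmat n M (j + k + 1)) * ‖z‖) := by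
        gcongr
        rw [← opNormE_conjTranspose]
        exact norm_mvE_le _ _
    _ ≤ k ! / (j + k)! * ‖lam‖ ^ (j + 1) *
          (opNormE (M 0)⁻¹ * ((j + k)! * C / r ^ (j + k + 1)) * ‖z‖) := by
        rw [norm_mul, norm_div, norm_pow, Complex.norm_natCast, Complex.norm_natCast]
        gcongr
    _ = _ := by
        rw [div_pow]
        field_simp
        ring

lemma summable_pow_div_factorial_mul_of_le {b : ℕ → ℝ} {B ρ r : ℝ} (hρ : 0 ≤ ρ) (hρr : ρ < r)
    (hb0 : ∀ k, 0 ≤ b k) (hb : ∀ k, b k ≤ B * (k ! / r ^ (k + 1))) :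
    Summable fun k => ρ ^ (k + 1) / (k + 1)! * b k := by
  have hr : 0 < r := hρ.trans_lt hρr
  have hB : 0 ≤ B := nonneg_of_mul_nonneg_left ((hb0 0).trans (hb 0)) (by positivity)
  refine ((summable_geometric_of_lt_one (by positivity) ((div_lt_one hr).2 hρr)).mul_left
    (B * (ρ / r))).of_nonneg_of_le (fun k => by have := hb0 k; positivity) fun k => ?_
  calc ρ ^ (k + 1) / (k + 1)! * b k ≤ ρ ^ (k + 1) / (k + 1)! * (B * (k ! / r ^ (k + 1))) := by
        gcongr
        exact hb k
    _ = B * (ρ / r) ^ (k + 1) * (k ! / (k + 1)!) := by ring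
    _ ≤ B * (ρ / r) ^ (k + 1) * 1 := by
        gcongr
        rw [div_le_one (by positivity)]
        exact_mod_cast Nat.factorial_le k.le_succ
    _ = B * (ρ / r) * (ρ / r) ^ k := by ring

/-- Blocks are indexed from `0` (`w k` is the paper's `w_{k+1}`) and the series index `j`
corresponds to the paper's `j+1`. -/
theorem w_mem_l1_general
    (n : ℕ) (ρ : ℝ) (hρ : 0 < ρ)
    (M : ℂ → Matrix (Fin n) (Fin n) ℂ)
    (hM : ∀ i i', AnalyticOnNhd ℂ (fun z => M z i i') (Metric.closedBall (0:ℂ) ρ))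
    (lam : ℂ) (hlamρ : ‖lam‖ < ρ)
    (z : EuclideanSpace ℂ (Fin n))
    (w : ℕ → EuclideanSpace ℂ (Fin n))
    (hw : ∀ k : ℕ, w k = ∑' j : ℕ,
      ((Nat.factorial k : ℂ) / (Nat.factorial (j + k)) * lam^(j+1)) •
        mvE ((Nmat n M (j + k + 1))ᴴ) z) :
    (∀ k : ℕ, Summable fun j : ℕ =>
        ‖((Nat.factorial k : ℂ) / (Nat.factorial (j + k)) * lam^(j+1)) •
          mvE ((Nmat n M (j + k + 1))ᴴ) z‖) ∧
      Summable fun k : ℕ => ρ^(k+1) / (Nat.factorial (k+1)) * ‖w k‖ := by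
  obtain ⟨r, hρr, C, hC⟩ := exists_opNormE_Mder_le hρ.le M hM
  have hr : 0 < r := hρ.trans hρr
  set q := ‖lam‖ / r
  have hq0 : 0 ≤ q := by positivity
  have hq1 : q < 1 := (div_lt_one hr).2 (hlamρ.trans hρr)
  set a : ℕ → ℝ := fun k => opNormE (M 0)⁻¹ * C * ‖z‖ * ‖lam‖ * k ! / r ^ (k + 1)
  have hterm : ∀ k j, ‖wSummand n M lam z k j‖ ≤ a k * q ^ j := norm_wSummand_le M hr hC lam z
  refine ⟨fun k => ((summable_geometric_of_lt_one hq0 hq1).mul_left (a k)).of_nonneg_of_le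
    (fun _ => norm_nonneg _) (hterm k), ?_⟩
  refine summable_pow_div_factorial_mul_of_le
    (B := opNormE (M 0)⁻¹ * C * ‖z‖ * ‖lam‖ * (1 - q)⁻¹) hρ.le hρr
    (fun k => norm_nonneg _) fun k => ?_
  calc ‖w k‖ ≤ a k * (1 - q)⁻¹ :=
        hw k ▸ tsum_of_norm_bounded ((hasSum_geometric_of_lt_one hq0 hq1).mul_left (a k)) (hterm k)
    _ = _ := by ring

/-- if `‖M^{(j)}(0)‖ ≤ M_ρ j!/ρ^j` for all `j ≥ 1`, `|λ| < ρ` and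
`z ∈ ℂⁿ`, then the series `w_k := Σ_{j≥1} ((k-1)!/(j+k-2)!) λ^j N_{j+k-1}^* z`
converge absolutely and `w ∈ ℓ₁(ρ)`.
Blocks are indexed from `0` (`w k` is the paper's `w_{k+1}`) and the series
index `j` below corresponds to the paper's `j+1`. -/
theorem w_mem_l1
    (n : ℕ) (hn : 1 ≤ n) (ρ : ℝ) (hρ : 0 < ρ)
    (M : ℂ → Matrix (Fin n) (Fin n) ℂ)
    (hM : ∀ i i', AnalyticOnNhd ℂ (fun z => M z i i') (Metric.closedBall (0:ℂ) ρ))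
    (hM0 : IsUnit (M 0))
    (Mρ : ℝ) (hMρpos : 0 < Mρ)
    (hMρ : ∀ j : ℕ, 1 ≤ j → opNormE (Mder n M j) ≤ Mρ * (Nat.factorial j) / ρ^j)
    (lam : ℂ) (hlamρ : ‖lam‖ < ρ)
    (z : EuclideanSpace ℂ (Fin n))
    (w : ℕ → EuclideanSpace ℂ (Fin n))
    (hw : ∀ k : ℕ, w k = ∑' j : ℕ,
      ((Nat.factorial k : ℂ) / (Nat.factorial (j + k)) * lam^(j+1)) •
        mvE ((Nmat n M (j + k + 1))ᴴ) z) :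
    (∀ k : ℕ, Summable fun j : ℕ =>
        ‖((Nat.factorial k : ℂ) / (Nat.factorial (j + k)) * lam^(j+1)) •
          mvE ((Nmat n M (j + k + 1))ᴴ) z‖) ∧
      Summable fun k : ℕ => ρ^(k+1) / (Nat.factorial (k+1)) * ‖w k‖ :=
  w_mem_l1_general n ρ hρ M hM lam hlamρ z w hw
end
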